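/- arXiv:2408.03052 — 4 statements merged into one kernel-verified Lean document; each statement's English description precedes it below -/
import Mathlib

section
/- Let (X, σ) be a ℤ-system which is topologically transitive and whose periodic points are dense in X. Then (X, σ) is positively topologically transitive: for all nonempty open U, V ⊆ X there exists n ≥ 0 with σ^n(U) ∩ V ≠ ∅. -/
/-- Let `(X, σ)` be a ℤ-system (nonempty compact metric space with a homeomorphism)
which is topologically transitive and whose periodic points are dense. Then it is
positively topologically transitive: for all nonempty open `U, V` there is `n ≥ 0`
with `σ^n(U) ∩ V ≠ ∅`. Here `σ^n` for `n : ℤ` is `σ.toEquiv ^ n`, and forward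
iterates are `(⇑σ)^[n]`. -/
theorem stmt3 {X : Type*} [MetricSpace X] [CompactSpace X] [Nonempty X] (σ : X ≃ₜ X)
    (htrans : ∀ U V : Set X, IsOpen U → IsOpen V → U.Nonempty → V.Nonempty →
      ∃ n : ℤ, ((σ.toEquiv ^ n) '' U ∩ V).Nonempty)
    (hper : Dense {x : X | ∃ n : ℕ, 1 ≤ n ∧ (⇑σ)^[n] x = x}) :
    ∀ U V : Set X, IsOpen U → IsOpen V → U.Nonempty → V.Nonempty →
      ∃ n : ℕ, ((⇑σ)^[n] '' U ∩ V).Nonempty := by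
  intro U V hU hV hUne hVne
  obtain ⟨n, y, ⟨u, huU, hy⟩, hyV⟩ := htrans U V hU hV hUne hVne
  rcases le_or_gt 0 n with hn | hn
  · -- n ≥ 0: direct
    refine ⟨n.toNat, y, ⟨u, huU, ?_⟩, hyV⟩
    have : σ.toEquiv ^ n = σ.toEquiv ^ (n.toNat : ℤ) := by rw [Int.toNat_of_nonneg hn]
    rw [this, zpow_natCast] at hy
    have := Equiv.Perm.coe_pow σ.toEquiv n.toNat
    simpa [this] using hy
  · -- n < 0
    obtain ⟨k, rfl⟩ : ∃ k : ℕ, n = -(k : ℤ) := ⟨n.natAbs, by omega⟩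
    -- σ.symm^[k] u ∈ V
    have hy' : (⇑σ.symm)^[k] u = y := by
      rw [← hy]
      have : σ.toEquiv ^ (-(k:ℤ)) = (σ.toEquiv ^ k)⁻¹ := by
        rw [zpow_neg, zpow_natCast]
      rw [this]
      have h2 : (σ.toEquiv ^ k)⁻¹ = (σ.symm.toEquiv ^ k) := by
        rw [← inv_pow]
        rfl
      rw [h2, Equiv.Perm.coe_pow]
      rfl
    -- the open set W
    set W : Set X := U ∩ (⇑σ.symm)^[k] ⁻¹' V with hW
    have hWopen : IsOpen W :=
      hU.inter (hV.preimage (σ.symm.continuous.iterate k))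
    have hWne : W.Nonempty := ⟨u, huU, by rw [Set.mem_preimage, hy']; exact hyV⟩
    obtain ⟨p, hpPer, hpW⟩ := hper.exists_mem_open hWopen hWne
    obtain ⟨j, hj1, hpj⟩ := hpPer
    obtain ⟨hpU, hpV⟩ := hpW
    -- commute of σ and σ.symm
    have hcomm : Function.Commute ⇑σ ⇑σ.symm := fun x => by simp
    have hcomm' := (hcomm.iterate_left j).iterate_right k
    set q := (⇑σ.symm)^[k] p with hq
    have hqfix : (⇑σ)^[j] q = q := by
      rw [hq, hcomm' p, hpj]
    -- choose m with m*j ≥ k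
    have hqV : q ∈ V := hpV
    refine ⟨k * j - k, (⇑σ)^[k * j - k] p, ⟨p, hpU, rfl⟩, ?_⟩
    have hpq : p = (⇑σ)^[k] q :=
      ((Function.LeftInverse.iterate σ.apply_symm_apply k) p).symm
    have key : (⇑σ)^[k * j - k] p = q := by
      rw [hpq, ← Function.iterate_add_apply]
      have hkk : k * j - k + k = k * j := by
        have : k ≤ k * j := Nat.le_mul_of_pos_right k (by omega)
        omega
      rw [hkk, mul_comm k j, Function.iterate_mul]
      exact Function.iterate_fixed hqfix k
    rw [key]; exact hqV
end

section
/- Let (X, σ) be a CAM ℤ-system and let φ : X → Y be a factor map onto a ℤ-system (Y, τ). If the ℤ-action on Y is faithful, then (Y, τ) is a CAM ℤ-system. -/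
/-
A factor map `φ` semiconjugates every power `σ ^ n` to `τ ^ n`. Hence `φ` carries an orbit
connecting two open sets `φ⁻¹ U`, `φ⁻¹ V` to one connecting `U` and `V`, and periodic points to
periodic points (density survives since `φ` is a continuous surjection). Conversely the preimage
of an infinite subsystem of `Y` is an infinite subsystem of `X`, hence all of `X`, and its image
under the surjection `φ` is all of `Y`.
-/

open Function Set

namespace Equiv.Perm

variable {α : Type*} [TopologicalSpace α]

def IsTopologicallyTransitive (e : Equiv.Perm α) : Prop :=
  ∀ U V : Set α, IsOpen U → IsOpen V → U.Nonempty → V.Nonempty →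
    ∃ n : ℤ, ((e ^ n) '' U ∩ V).Nonempty

def HasNoProperInfiniteSubsystem (e : Equiv.Perm α) : Prop :=
  ∀ Z : Set α, Z.Nonempty → IsClosed Z → (∀ n : ℤ, (e ^ n) '' Z ⊆ Z) → Z.Infinite → Z = univ

end Equiv.Perm

namespace Function.Semiconj

variable {α β : Type*} {f : α → β} {ea : Equiv.Perm α} {eb : Equiv.Perm β}

theorem perm_pow (h : Semiconj f ea eb) (n : ℕ) : Semiconj f ⇑(ea ^ n) ⇑(eb ^ n) := by
  simpa only [Equiv.Perm.coe_pow] using h.iterate_right n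

theorem perm_zpow (h : Semiconj f ea eb) : ∀ n : ℤ, Semiconj f ⇑(ea ^ n) ⇑(eb ^ n)
  | (n : ℕ) => by simpa only [zpow_natCast] using h.perm_pow n
  | .negSucc n => by
    simp only [zpow_negSucc]
    exact (h.perm_pow (n + 1)).inverses_right (ea ^ (n + 1)).right_inv (eb ^ (n + 1)).left_inv

variable [TopologicalSpace α] [TopologicalSpace β]

theorem isTopologicallyTransitive (h : Semiconj f ea eb) (hc : Continuous f) (hs : Surjective f)
    (hea : ea.IsTopologicallyTransitive) : eb.IsTopologicallyTransitive := by
  intro U V hU hV hUne hVne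
  obtain ⟨n, _, ⟨x, hxU, rfl⟩, hxV⟩ := hea (f ⁻¹' U) (f ⁻¹' V) (hU.preimage hc)
    (hV.preimage hc) (hs.nonempty_preimage.mpr hUne) (hs.nonempty_preimage.mpr hVne)
  exact ⟨n, _, ⟨f x, hxU, (h.perm_zpow n x).symm⟩, hxV⟩

theorem dense_periodicPts (h : Semiconj f ea eb) (hc : Continuous f) (hs : Surjective f)
    (hea : Dense (periodicPts ea)) : Dense (periodicPts eb) :=
  (hs.denseRange.dense_image hc hea).mono h.mapsTo_periodicPts.image_subset

theorem hasNoProperInfiniteSubsystem (h : Semiconj f ea eb) (hc : Continuous f)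
    (hs : Surjective f) (hea : ea.HasNoProperInfiniteSubsystem) :
    eb.HasNoProperInfiniteSubsystem := by
  intro Z hZne hZcl hZinv hZinf
  have hinv : ∀ n : ℤ, (ea ^ n) '' (f ⁻¹' Z) ⊆ f ⁻¹' Z := by
    rintro n _ ⟨x, hx, rfl⟩
    rw [mem_preimage, h.perm_zpow n x]
    exact hZinv n (mem_image_of_mem _ hx)
  have hfull := hea (f ⁻¹' Z) (hs.nonempty_preimage.mpr hZne) (hZcl.preimage hc) hinv
    (hZinf.preimage (hs.range_eq ▸ subset_univ Z))
  rw [← hs.image_preimage Z, hfull, image_univ, hs.range_eq]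

end Function.Semiconj

theorem stmt4_general {X : Type*} [MetricSpace X] (σ : X ≃ₜ X)
    {Y : Type*} [MetricSpace Y] (τ : Y ≃ₜ Y)
    (φ : X → Y) (hφc : Continuous φ) (hφs : Function.Surjective φ)
    (hφeq : ∀ x : X, φ (σ x) = τ (φ x))
    -- X is CAM:
    (hXtrans : ∀ U V : Set X, IsOpen U → IsOpen V → U.Nonempty → V.Nonempty →
      ∃ n : ℤ, ((σ.toEquiv ^ n) '' U ∩ V).Nonempty)
    (hXper : Dense {x : X | ∃ n : ℕ, 1 ≤ n ∧ (⇑σ)^[n] x = x})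
    (hXmin : ∀ Z : Set X, Z.Nonempty → IsClosed Z →
      (∀ n : ℤ, (σ.toEquiv ^ n) '' Z ⊆ Z) → Z.Infinite → Z = Set.univ)
    -- Y is faithful:
    (hYfaith : ∀ n : ℕ, 1 ≤ n → ∃ y : Y, (⇑τ)^[n] y ≠ y) :
    -- then Y is CAM:
    (∀ n : ℕ, 1 ≤ n → ∃ y : Y, (⇑τ)^[n] y ≠ y) ∧
    (∀ U V : Set Y, IsOpen U → IsOpen V → U.Nonempty → V.Nonempty →
      ∃ n : ℤ, ((τ.toEquiv ^ n) '' U ∩ V).Nonempty) ∧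
    Dense {y : Y | ∃ n : ℕ, 1 ≤ n ∧ (⇑τ)^[n] y = y} ∧
    (∀ Z : Set Y, Z.Nonempty → IsClosed Z →
      (∀ n : ℤ, (τ.toEquiv ^ n) '' Z ⊆ Z) → Z.Infinite → Z = Set.univ) := by
  have hsemi : Semiconj φ σ.toEquiv τ.toEquiv := hφeq
  exact ⟨hYfaith, hsemi.isTopologicallyTransitive hφc hφs hXtrans,
    hsemi.dense_periodicPts hφc hφs hXper, hsemi.hasNoProperInfiniteSubsystem hφc hφs hXmin⟩

/-- Let `(X, σ)` be a CAM ℤ-system and `φ : X → Y` a factor map onto a ℤ-system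
`(Y, τ)`. If the ℤ-action on `Y` is faithful, then `(Y, τ)` is CAM.
A ℤ-system is CAM if it is faithful, topologically transitive, has dense periodic
points, and has no proper infinite subsystem. -/
theorem stmt4 {X : Type*} [MetricSpace X] [CompactSpace X] [Nonempty X] (σ : X ≃ₜ X)
    {Y : Type*} [MetricSpace Y] [CompactSpace Y] [Nonempty Y] (τ : Y ≃ₜ Y)
    (φ : X → Y) (hφc : Continuous φ) (hφs : Function.Surjective φ)
    (hφeq : ∀ x : X, φ (σ x) = τ (φ x))
    -- X is CAM:
    (hXfaith : ∀ n : ℕ, 1 ≤ n → ∃ x : X, (⇑σ)^[n] x ≠ x)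
    (hXtrans : ∀ U V : Set X, IsOpen U → IsOpen V → U.Nonempty → V.Nonempty →
      ∃ n : ℤ, ((σ.toEquiv ^ n) '' U ∩ V).Nonempty)
    (hXper : Dense {x : X | ∃ n : ℕ, 1 ≤ n ∧ (⇑σ)^[n] x = x})
    (hXmin : ∀ Z : Set X, Z.Nonempty → IsClosed Z →
      (∀ n : ℤ, (σ.toEquiv ^ n) '' Z ⊆ Z) → Z.Infinite → Z = Set.univ)
    -- Y is faithful:
    (hYfaith : ∀ n : ℕ, 1 ≤ n → ∃ y : Y, (⇑τ)^[n] y ≠ y) :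
    -- then Y is CAM:
    (∀ n : ℕ, 1 ≤ n → ∃ y : Y, (⇑τ)^[n] y ≠ y) ∧
    (∀ U V : Set Y, IsOpen U → IsOpen V → U.Nonempty → V.Nonempty →
      ∃ n : ℤ, ((τ.toEquiv ^ n) '' U ∩ V).Nonempty) ∧
    Dense {y : Y | ∃ n : ℕ, 1 ≤ n ∧ (⇑τ)^[n] y = y} ∧
    (∀ Z : Set Y, Z.Nonempty → IsClosed Z →
      (∀ n : ℤ, (τ.toEquiv ^ n) '' Z ⊆ Z) → Z.Infinite → Z = Set.univ) :=
  stmt4_general σ τ φ hφc hφs hφeq hXtrans hXper hXmin hYfaith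
end

section
/- For a word u ∈ {0,1}^*, the following are equivalent: (i) u occurs as a subword of some point x ∈ X (i.e. u = x_{[i, i+|u|−1]} for some i ∈ ℤ); (ii) u occurs as a subword of w_m^ℤ for some m; (iii) there exists N such that for all n ≥ N, u occurs as a subword of the word w_{2n}. -/
/-- The shift map σ on the full shift `{0,1}^ℤ`, `σ(x)_i = x_{i+1}`. -/
def shift (x : ℤ → Bool) : ℤ → Bool := fun i => x (i + 1)

/-- The iterate `σ^k` of the shift, for `k ∈ ℤ`. -/
def shiftZ (k : ℤ) (x : ℤ → Bool) : ℤ → Bool := fun i => x (i + k)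

/-- `wlist n` is the list `[w_0, w_1, …, w_{2n+1}]` of the words of the construction:
`w_0 = 0`, `w_1 = 1`, and for `n ≥ 1`, `a ∈ {0,1}`,
`w_{2n+a} = w_{2n-2} w_a w_{2n-2} ∏_{k=0}^{2n-1} (w_k^n w_{2n-2})`. -/
def wlist : ℕ → List (List Bool)
  | 0 => [[false], [true]]
  | n + 1 =>
    let prev := wlist n
    let w : ℕ → List Bool := fun k => prev.getD k []
    let base := w (2 * n)
    let tail := (List.range (2 * n + 2)).flatMap
      (fun k => (List.replicate (n + 1) (w k)).flatten ++ base)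
    prev ++ [base ++ w 0 ++ base ++ tail, base ++ w 1 ++ base ++ tail]

/-- The word `w_n`. -/
def wrd (n : ℕ) : List Bool := (wlist n).getD n []

/-- The periodic point `u^ℤ` associated to a nonempty word `u`;
it satisfies `(u^ℤ)_{m|u|+i} = u_i` for all `m ∈ ℤ`, `0 ≤ i < |u|`. -/
def perPt (u : List Bool) : ℤ → Bool := fun i => u.getD ((i % (u.length : ℤ)).toNat) false

/-- The union of the shift orbits of the points `w_n^ℤ`. -/
def Xgen : Set (ℤ → Bool) := {x | ∃ (n : ℕ) (k : ℤ), x = shiftZ k (perPt (wrd n))}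

/-- The subshift `X`: the smallest subshift containing the points `w_n^ℤ`,
i.e. the closure of the union of their shift orbits. -/
def XX : Set (ℤ → Bool) := closure Xgen

/-- The word `u` occurs as a (contiguous) subword of the point `x`. -/
def occursIn (u : List Bool) (x : ℤ → Bool) : Prop :=
  ∃ i : ℤ, ∀ j : ℕ, j < u.length → x (i + (j : ℤ)) = u.getD j false

section Aux

lemma wlist_length (n : ℕ) : (wlist n).length = 2 * n + 2 := by
  induction n with
  | zero => rfl
  | succ n ih =>
    show (wlist n ++ [_, _]).length = _
    simp [ih]; omega

def blk (n a : ℕ) : List Bool :=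
  (wlist n).getD (2*n) [] ++ (wlist n).getD a [] ++ (wlist n).getD (2*n) [] ++
    (List.range (2*n+2)).flatMap
      (fun k => (List.replicate (n+1) ((wlist n).getD k [])).flatten ++ (wlist n).getD (2*n) [])

lemma wlist_succ (n : ℕ) : wlist (n+1) = wlist n ++ [blk n 0, blk n 1] := rfl

lemma wlist_prefix : ∀ {m n : ℕ}, m ≤ n → wlist m <+: wlist n := by
  intro m n h
  induction n with
  | zero => cases Nat.le_zero.mp h; rfl
  | succ n ih =>
    rcases Nat.lt_or_ge m (n+1) with h' | h'
    · exact (ih (by omega)).trans (wlist_succ n ▸ List.prefix_append _ _)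
    · have : m = n + 1 := by omega
      subst this; rfl

lemma getD_of_prefix {l₁ l₂ : List (List Bool)} (h : l₁ <+: l₂) {i : ℕ} (hi : i < l₁.length) :
    l₂.getD i [] = l₁.getD i [] := by
  obtain ⟨t, rfl⟩ := h
  exact List.getD_append _ _ _ _ hi

lemma wrd_eq_getD {n k : ℕ} (hk : k ≤ 2*n+1) : (wlist n).getD k [] = wrd k := by
  rcases le_total k n with h | h
  · exact getD_of_prefix (wlist_prefix h) (by rw [wlist_length]; omega)
  · exact (getD_of_prefix (wlist_prefix h) (by rw [wlist_length]; omega)).symm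

def tailW (n : ℕ) : List Bool :=
  (List.range (2*n+2)).flatMap
    (fun k => (List.replicate (n+1) ((wlist n).getD k [])).flatten ++ wrd (2*n))

lemma blk_eq (n a : ℕ) (ha : a ≤ 1) :
    blk n a = wrd (2*n) ++ wrd a ++ wrd (2*n) ++ tailW n := by
  rw [blk, tailW, wrd_eq_getD (by omega), wrd_eq_getD (show a ≤ 2*n+1 by omega)]

lemma wrd_even_eq (n : ℕ) :
    wrd (2*n+2) = wrd (2*n) ++ wrd 0 ++ wrd (2*n) ++ tailW n := by
  rw [← wrd_eq_getD (show 2*n+2 ≤ 2*(n+1)+1 by omega), wlist_succ,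
    List.getD_append_right _ _ _ _ (by rw [wlist_length]), wlist_length]
  simp only [Nat.sub_self, List.getD_cons_zero]
  exact blk_eq n 0 (by omega)

lemma wrd_odd_eq (n : ℕ) :
    wrd (2*n+3) = wrd (2*n) ++ wrd 1 ++ wrd (2*n) ++ tailW n := by
  rw [← wrd_eq_getD (show 2*n+3 ≤ 2*(n+1)+1 by omega), wlist_succ,
    List.getD_append_right _ _ _ _ (by rw [wlist_length]; omega), wlist_length,
    show 2*n+3 - (2*n+2) = 1 by omega]
  simp only [List.getD_cons_succ, List.getD_cons_zero]
  exact blk_eq n 1 le_rfl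

lemma wrd_ne_nil : ∀ n, wrd n ≠ [] := by
  intro n
  induction n using Nat.strong_induction_on with
  | _ n ih =>
    match n, ih with
    | 0, _ => simp [wrd, wlist]
    | 1, _ => simp [wrd, wlist]
    | (m+2), ih =>
      rcases Nat.even_or_odd m with ⟨t, ht⟩ | ⟨t, ht⟩
      · rw [show m + 2 = 2*t+2 by omega, wrd_even_eq]
        have := ih (2*t) (by omega)
        simp only [ne_eq, List.append_eq_nil_iff]
        tauto
      · rw [show m + 2 = 2*t+3 by omega, wrd_odd_eq]
        have := ih (2*t) (by omega)
        simp only [ne_eq, List.append_eq_nil_iff]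
        tauto

lemma infix_flatMap {α β : Type _} {a : α} {l : List α} (f : α → List β) (h : a ∈ l) :
    f a <:+: l.flatMap f := by
  obtain ⟨s, t, rfl⟩ := List.append_of_mem h
  rw [List.flatMap_append, List.flatMap_cons]
  exact (List.prefix_append (f a) _).isInfix.trans (List.suffix_append _ _).isInfix

lemma replicate_flatten_infix {n k : ℕ} (hk : k ≤ 2*n+1) :
    (List.replicate (n+1) (wrd k)).flatten <:+: wrd (2*n+2) := by
  have hk' : k ∈ List.range (2*n+2) := by simp; omega
  have h1 := infix_flatMap
    (fun k => (List.replicate (n+1) ((wlist n).getD k [])).flatten ++ wrd (2*n)) hk'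
  have h2 : (List.replicate (n+1) (wrd k)).flatten <:+: tailW n := by
    rw [← wrd_eq_getD hk]
    exact (List.prefix_append _ _).isInfix.trans h1
  rw [wrd_even_eq]
  exact h2.trans (List.suffix_append _ _).isInfix

lemma occursIn_perPt_of_infix {u w : List Bool} (hw : w ≠ []) (h : u <:+: w) :
    occursIn u (perPt w) := by
  obtain ⟨s, t, rfl⟩ := h
  refine ⟨(s.length : ℤ), fun j hj => ?_⟩
  have hlen : s.length + j < (s ++ u ++ t).length := by
    simp [List.length_append]; omega
  simp only [perPt]
  have hc : (s.length : ℤ) + (j : ℤ) = ((s.length + j : ℕ) : ℤ) := by push_cast; ring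
  rw [hc]
  have hmod : (((s.length + j : ℕ) : ℤ) % (((s ++ u ++ t).length : ℕ) : ℤ)).toNat
      = s.length + j := by
    rw [Int.emod_eq_of_lt (by positivity) (by exact_mod_cast hlen)]
    omega
  rw [hmod, List.append_assoc, List.getD_append_right _ _ _ _ (by omega)]
  rw [show s.length + j - s.length = j by omega]
  exact List.getD_append _ _ _ _ hj

lemma flatten_replicate_length (w : List Bool) (r : ℕ) :
    (List.replicate r w).flatten.length = r * w.length := by
  simp [List.length_flatten, List.map_replicate, List.sum_replicate, smul_eq_mul]

lemma flatten_replicate_getD (w : List Bool) (r : ℕ) :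
    ∀ t : ℕ, t < r * w.length →
      (List.replicate r w).flatten.getD t false = w.getD (t % w.length) false := by
  induction r with
  | zero => intro t ht; omega
  | succ r ih =>
    intro t ht
    rw [List.replicate_succ, List.flatten_cons]
    rcases Nat.lt_or_ge t w.length with h | h
    · rw [List.getD_append _ _ _ _ h, Nat.mod_eq_of_lt h]
    · have hsm : (r+1) * w.length = r * w.length + w.length := by ring
      have hmm := Nat.add_mod_right (t - w.length) w.length
      rw [Nat.sub_add_cancel h] at hmm
      rw [List.getD_append_right _ _ _ _ h, ih (t - w.length) (by omega), hmm]

lemma flatten_replicate_prefix {w : List Bool} {r s : ℕ} (h : r ≤ s) :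
    (List.replicate r w).flatten <+: (List.replicate s w).flatten := by
  rw [show s = r + (s - r) by omega, List.replicate_add, List.flatten_append]
  exact List.prefix_append _ _

lemma infix_flatten_replicate_of_occurs {u w : List Bool} (hw : w ≠ [])
    (h : occursIn u (perPt w)) :
    u <:+: (List.replicate (u.length + 1) w).flatten := by
  obtain ⟨i, hi⟩ := h
  have hw0 : 0 < w.length := List.length_pos_iff.mpr hw
  have hL0 : (0:ℤ) < (w.length : ℤ) := by exact_mod_cast hw0
  set i0 : ℕ := (i % (w.length : ℤ)).toNat with hi0
  have hi0' : (i0 : ℤ) = i % (w.length : ℤ) :=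
    Int.toNat_of_nonneg (Int.emod_nonneg i (by omega))
  have hi0lt : i0 < w.length := by
    have := Int.emod_lt_of_pos i hL0
    omega
  have hmod : ∀ j : ℕ, perPt w (i + j) = w.getD ((i0 + j) % w.length) false := by
    intro j
    simp only [perPt]
    have heq : i + (j:ℤ) = ((i0 + j : ℕ) : ℤ) + (w.length : ℤ) * (i / (w.length : ℤ)) := by
      have := Int.mul_ediv_add_emod i (w.length : ℤ)
      push_cast
      linarith [hi0']
    rw [heq, Int.add_mul_emod_self_left, ← Int.natCast_mod, Int.toNat_natCast]
  set r : ℕ := u.length + 1 with hr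
  set F : List Bool := (List.replicate r w).flatten with hF
  have hFlen : F.length = r * w.length := flatten_replicate_length w r
  have hle : i0 + u.length ≤ r * w.length := by
    have h1 : u.length ≤ u.length * w.length := Nat.le_mul_of_pos_right _ hw0
    have h2 : r * w.length = u.length * w.length + w.length := by rw [hr]; ring
    omega
  have hu : u = (F.drop i0).take u.length := by
    apply List.ext_getElem
    · rw [List.length_take, List.length_drop, hFlen]
      omega
    · intro j h1 h2
      rw [List.getElem_take, List.getElem_drop]
      have hj : j < u.length := h1
      have hFj : i0 + j < F.length := by omega
      rw [← List.getD_eq_getElem F false hFj, ← List.getD_eq_getElem u false hj]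
      rw [hF, flatten_replicate_getD w r _ (by omega), ← hmod j]
      exact (hi j h1).symm
  calc u = (F.drop i0).take u.length := hu
    _ <:+: F := (List.take_prefix _ _).isInfix.trans (List.drop_suffix _ _).isInfix

lemma perPt_wrd_mem_XX (m : ℕ) : perPt (wrd m) ∈ XX :=
  subset_closure ⟨m, 0, by funext i; simp [shiftZ]⟩

lemma exists_perPt_of_mem_XX {u : List Bool} {x : ℤ → Bool} (hx : x ∈ XX)
    (h : occursIn u x) : ∃ m, occursIn u (perPt (wrd m)) := by
  obtain ⟨i, hi⟩ := h
  set V : Set (ℤ → Bool) := ⋂ j : Fin u.length, {y | y (i + ((j:ℕ):ℤ)) = u.getD j false}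
    with hV
  have hVopen : IsOpen V := isOpen_iInter_of_finite fun j =>
    show IsOpen ((fun y : ℤ → Bool => y (i + ((j:ℕ):ℤ))) ⁻¹' {u.getD (j:ℕ) false}) from
      (isOpen_discrete _).preimage (continuous_apply _)
  have hxV : x ∈ V := Set.mem_iInter.mpr fun j => hi j j.isLt
  obtain ⟨y, hyV, hyX⟩ := mem_closure_iff.mp hx V hVopen hxV
  obtain ⟨m, k, rfl⟩ := hyX
  refine ⟨m, i + k, fun j hj => ?_⟩
  have hj' := Set.mem_iInter.mp hyV ⟨j, hj⟩
  simp only [shiftZ, Set.mem_setOf_eq] at hj'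
  rw [show i + k + (j:ℤ) = i + (j:ℤ) + k by ring]
  exact hj'

end Aux

/-- For a word `u ∈ {0,1}^*`, the following are equivalent:
(i) `u` occurs in some point of `X`; (ii) `u` occurs in `w_m^ℤ` for some `m`;
(iii) for all sufficiently large `n`, `u` occurs as a subword of the word `w_{2n}`. -/
theorem stmt7 (u : List Bool) :
    ((∃ x ∈ XX, occursIn u x) ↔ (∃ m : ℕ, occursIn u (perPt (wrd m)))) ∧
    ((∃ x ∈ XX, occursIn u x) ↔ (∃ N : ℕ, ∀ n : ℕ, N ≤ n → u <:+: wrd (2 * n))) := by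
  have hA : ∀ {v : List Bool}, (∃ x ∈ XX, occursIn v x) → ∃ m, occursIn v (perPt (wrd m)) := by
    rintro v ⟨x, hx, ho⟩
    exact exists_perPt_of_mem_XX hx ho
  have hB : (∃ m, occursIn u (perPt (wrd m))) → ∃ x ∈ XX, occursIn u x := by
    rintro ⟨m, hm⟩
    exact ⟨perPt (wrd m), perPt_wrd_mem_XX m, hm⟩
  have h2 : (∃ m, occursIn u (perPt (wrd m))) → ∃ N, ∀ n, N ≤ n → u <:+: wrd (2*n) := by
    rintro ⟨m, hm⟩
    have hinf := infix_flatten_replicate_of_occurs (wrd_ne_nil m) hm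
    refine ⟨m + u.length + 2, fun n hn => ?_⟩
    have h1 : u <:+: (List.replicate n (wrd m)).flatten :=
      hinf.trans (flatten_replicate_prefix (by omega)).isInfix
    have h3 : (List.replicate n (wrd m)).flatten <:+: wrd (2*n) := by
      have h := replicate_flatten_infix (n := n - 1) (k := m) (by omega)
      rw [show (n-1)+1 = n by omega, show 2*(n-1)+2 = 2*n by omega] at h
      exact h
    exact h1.trans h3
  refine ⟨⟨hA, hB⟩, ⟨fun h => h2 (hA h), ?_⟩⟩
  rintro ⟨N, hN⟩
  exact ⟨perPt (wrd (2*N)), perPt_wrd_mem_XX _,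
    occursIn_perPt_of_infix (wrd_ne_nil _) (hN N le_rfl)⟩
end

section
/- Let G be a finitely generated group, A a finite set, and X ⊆ A^G a finite subshift (a finite nonempty closed shift-invariant subset). Then X is a subshift of finite type: there exist a finite subset D ⊆ G and a set F ⊆ A^D of patterns such that X = {x ∈ A^G : for all g ∈ G, the pattern (h ↦ x_{gh}) on D does not belong to F}. -/
/-- The shift action of `G` on the full shift `A^G`: `(g • x)_h = x_{g⁻¹h}`. -/
def gshift {G A : Type*} [Group G] (g : G) (x : G → A) : G → A :=
  fun h => x (g⁻¹ * h)

lemma gshift_comp {G A : Type*} [Group G] (a b : G) (x : G → A) :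
    gshift b⁻¹ (gshift a⁻¹ x) = gshift (a * b)⁻¹ x := by
  funext h
  simp [gshift, mul_assoc]

lemma gshift_inv_shift {G A : Type*} [Group G] (s : G) (x : G → A) :
    gshift s (gshift s⁻¹ x) = x := by
  funext h
  simp [gshift]

/-- Let `G` be a finitely generated group, `A` a finite (discrete) set, and
`X ⊆ A^G` a finite subshift. Then `X` is of finite type: there are a finite
`D ⊆ G` and a set `F` of patterns on `D` such that `X` is the set of points none of
whose translates restrict on `D` to a pattern of `F`. -/
theorem stmt14 (G : Type*) [Group G] (hfg : Group.FG G)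
    (A : Type*) [Finite A] [TopologicalSpace A] [DiscreteTopology A]
    (X : Set (G → A)) (hne : X.Nonempty) (hcl : IsClosed X)
    (hinv : ∀ g : G, gshift g '' X = X) (hfin : X.Finite) :
    ∃ (D : Finset G) (F : Set (D → A)),
      X = {x : G → A | ∀ g : G, (fun h : D => x (g * h)) ∉ F} := by
  classical
  obtain ⟨S, hS⟩ := hfg
  letI : Fintype X := hfin.fintype
  -- a separating point for each pair
  have hmemshift : ∀ (g : G) {x : G → A}, x ∈ X → gshift g x ∈ X := by
    intro g x hx
    rw [← hinv g]
    exact ⟨x, hx, rfl⟩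
  let dd : X × X → G := fun p =>
    if h : ∃ d : G, (p.1 : G → A) d ≠ (p.2 : G → A) d then h.choose else 1
  let D₀ : Finset G := Finset.image dd Finset.univ
  have sep : ∀ x ∈ X, ∀ y ∈ X, (∀ d ∈ D₀, x d = y d) → x = y := by
    intro x hx y hy hagree
    by_contra hne'
    have hex : ∃ d : G, ((⟨x, hx⟩ : X) : G → A) d ≠ ((⟨y, hy⟩ : X) : G → A) d := by
      by_contra hno
      push_neg at hno
      exact hne' (funext hno)
    have hdd : dd (⟨x, hx⟩, ⟨y, hy⟩) = hex.choose := dif_pos hex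
    have hmem : dd (⟨x, hx⟩, ⟨y, hy⟩) ∈ D₀ :=
      Finset.mem_image_of_mem dd (Finset.mem_univ _)
    have := hagree _ hmem
    rw [hdd] at this
    exact hex.choose_spec this
  let D : Finset G := insert 1 (D₀ ∪ S.biUnion (fun s => D₀.image (fun d => s * d)))
  have h1D : (1 : G) ∈ D := Finset.mem_insert_self _ _
  have hD₀D : ∀ d ∈ D₀, d ∈ D := fun d hd =>
    Finset.mem_insert_of_mem (Finset.mem_union_left _ hd)
  have hSD : ∀ s ∈ S, ∀ d ∈ D₀, s * d ∈ D := fun s hs d hd =>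
    Finset.mem_insert_of_mem (Finset.mem_union_right _
      (Finset.mem_biUnion.mpr ⟨s, hs, Finset.mem_image_of_mem _ hd⟩))
  refine ⟨D, {p | ¬ ∃ x ∈ X, ∀ h : D, x h = p h}, ?_⟩
  ext z
  simp only [Set.mem_setOf_eq, not_not]
  constructor
  · intro hz g
    refine ⟨gshift g⁻¹ z, hmemshift _ hz, ?_⟩
    intro h
    simp [gshift]
  · intro hz
    choose xg hxgX hxg using hz
    -- key step: shifting by a generator
    have key : ∀ s ∈ S, ∀ g' : G, xg (g' * s) = gshift s⁻¹ (xg g') := by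
      intro s hs g'
      refine sep _ (hxgX _) _ (hmemshift _ (hxgX g')) ?_
      intro d hd
      have h1 : xg (g' * s) d = z (g' * s * d) := hxg (g' * s) ⟨d, hD₀D d hd⟩
      have h2 : xg g' (s * d) = z (g' * (s * d)) := hxg g' ⟨s * d, hSD s hs d hd⟩
      rw [h1]
      show _ = xg g' (s⁻¹⁻¹ * d)
      rw [inv_inv, h2, mul_assoc]
    -- extend to all of G by closure induction
    have keyAll : ∀ b : G, ∀ g' : G, xg (g' * b) = gshift b⁻¹ (xg g') := by
      intro b
      have hb : b ∈ Subgroup.closure (S : Set G) := hS ▸ Subgroup.mem_top b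
      induction hb using Subgroup.closure_induction with
      | mem s hs => exact key s hs
      | one => intro g'; funext h; simp [gshift]
      | mul a b _ _ ha hb =>
        intro g'
        rw [← mul_assoc, hb (g' * a), ha g', gshift_comp]
      | inv a _ ha =>
        intro g'
        have := ha (g' * a⁻¹)
        rw [inv_mul_cancel_right] at this
        rw [this, inv_inv, gshift_inv_shift]
    have hz1 : z = xg 1 := by
      funext g
      have h1 : xg g 1 = z (g * 1) := hxg g ⟨1, h1D⟩
      have h2 : xg g = gshift g⁻¹ (xg 1) := by
        have := keyAll g 1
        rwa [one_mul] at this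
      have : z (g * 1) = gshift g⁻¹ (xg 1) 1 := by rw [← h1, h2]
      simpa [gshift] using this
    rw [hz1]
    exact hxgX 1
end
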